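/- There exists a universal constant C > 0 such that for every f : [0,1] → ℝ of total variation TV(f) on [0,1] and every integer r ≥ 1, the r-th largest value among the absolute Haar coefficients {|θ_{j,k}(f)| : j ≥ 0, 0 ≤ k ≤ 2^j − 1} (when they are arranged in nonincreasing order) is at most C · TV(f) · r^{−3/2}. -/

import Mathlib

open MeasureTheory

/-- The Haar mother wavelet. -/
noncomputable def haarMother (x : ℝ) : ℝ :=
  if 0 ≤ x ∧ x < 1/2 then 1 else if 1/2 ≤ x ∧ x < 1 then -1 else 0

/-- The Haar child wavelet at scale `j` and location `k`. -/
noncomputable def haarChild (j k : ℕ) (x : ℝ) : ℝ :=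
  (2:ℝ) ^ ((j:ℝ)/2) * haarMother ((2:ℝ)^(j:ℕ) * x - (k:ℝ))

/-- The Haar coefficient of `f` at scale `j` and location `k`. -/
noncomputable def haarCoeff (j k : ℕ) (f : ℝ → ℝ) : ℝ :=
  ∫ x in (0:ℝ)..1, f x * haarChild j k x

lemma ae_ne_imp (c : ℝ) {P : ℝ → Prop} (h : ∀ x, x ≠ c → P x) : ∀ᵐ x : ℝ, P x := by
  rw [MeasureTheory.ae_iff]
  refine measure_mono_null (fun x hx => ?_) (Real.volume_singleton (a := c))
  simp only [Set.mem_setOf_eq] at hx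
  simp only [Set.mem_singleton_iff]
  by_contra hxc
  exact hx (h x hxc)

lemma rpow_half (j : ℕ) : (2:ℝ) ^ ((j:ℝ)/2) = Real.sqrt 2 ^ j := by
  rw [show (j:ℝ)/2 = (1/2) * (j:ℕ) by ring]
  rw [Real.rpow_mul (by norm_num), Real.rpow_natCast, ← Real.sqrt_eq_rpow]

lemma haar_coeff_bound (f : ℝ → ℝ) (j k : ℕ) (hk : k < 2^j)
    (hfin : eVariationOn f (Set.Icc ((k:ℝ)/2^j) (((k:ℝ)+1)/2^j)) ≠ ⊤) :
    |haarCoeff j k f| ≤ (Real.sqrt 2)⁻¹ ^ j / 2 *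
      (eVariationOn f (Set.Icc ((k:ℝ)/2^j) (((k:ℝ)+1)/2^j))).toReal := by
  set e : ℝ := (2:ℝ)^j with he_def
  have he : (0:ℝ) < e := by positivity
  set a : ℝ := (k:ℝ)/e with ha_def
  set b : ℝ := ((k:ℝ)+1)/e with hb_def
  set d : ℝ := 1/(2*e) with hd_def
  set m : ℝ := a + d with hm_def
  set V : ℝ := (eVariationOn f (Set.Icc a b)).toReal with hV_def
  have hV0 : 0 ≤ V := ENNReal.toReal_nonneg
  have hd0 : 0 < d := by positivity
  have hm_eq : a + d = m := rfl
  have hb_eq : m + d = b := by rw [hm_def, ha_def, hb_def, hd_def]; field_simp; ring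
  have ham : a < m := by simp [hm_def]; linarith
  have hmb : m < b := by rw [← hb_eq]; linarith
  have ha0 : 0 ≤ a := by positivity
  have hb1 : b ≤ 1 := by
    rw [hb_def, div_le_one he]
    have : (k:ℝ) + 1 ≤ (2:ℝ)^j := by
      have := hk
      have : ((k+1:ℕ):ℝ) ≤ ((2^j : ℕ):ℝ) := by exact_mod_cast hk
      push_cast at this; linarith
    linarith
  set c2 : ℝ := (2:ℝ)^((j:ℝ)/2) with hc2_def
  have hc2 : 0 < c2 := by rw [hc2_def]; positivity
  set F : ℝ → ℝ := fun x => f x * haarChild j k x with hF_def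
  -- value of F on the pieces
  have hFlt : ∀ x, x < a → F x = 0 := by
    intro x hx
    have ht : e*x - k < 0 := by
      have : e * x < e * a := by exact (mul_lt_mul_iff_right₀ he).2 hx
      rw [ha_def] at this; rw [mul_div_cancel₀ _ (ne_of_gt he)] at this; linarith
    simp only [hF_def, haarChild, haarMother, he_def]
    rw [if_neg (by rw [← he_def]; intro h; linarith [h.1]), if_neg (by rw [← he_def]; intro h; linarith [h.1, (by norm_num : (0:ℝ) < 1/2)])]
    ring
  have hFgt : ∀ x, b ≤ x → F x = 0 := by
    intro x hx
    have ht : (1:ℝ) ≤ e*x - k := by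
      have : e * b ≤ e * x := by exact (mul_le_mul_iff_right₀ he).2 hx
      rw [hb_def, mul_div_cancel₀ _ (ne_of_gt he)] at this; linarith
    simp only [hF_def, haarChild, haarMother, he_def]
    rw [if_neg (by rw [← he_def]; intro h; linarith [h.2]), if_neg (by rw [← he_def]; intro h; linarith [h.2])]
    ring
  have hF1 : ∀ x, a ≤ x → x < m → F x = c2 * f x := by
    intro x hx1 hx2
    have h1 : 0 ≤ e*x - k := by
      have : e * a ≤ e * x := (mul_le_mul_iff_right₀ he).2 hx1
      rw [ha_def, mul_div_cancel₀ _ (ne_of_gt he)] at this; linarith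
    have h2 : e*x - k < 1/2 := by
      have : e * x < e * m := (mul_lt_mul_iff_right₀ he).2 hx2
      rw [hm_def, mul_add, ha_def, mul_div_cancel₀ _ (ne_of_gt he), hd_def] at this
      have hed : e * (1/(2*e)) = 1/2 := by field_simp
      rw [hed] at this; linarith
    simp only [hF_def, haarChild, haarMother, he_def]
    rw [if_pos (by rw [← he_def]; exact ⟨h1, h2⟩)]
    ring
  have hF2 : ∀ x, m ≤ x → x < b → F x = -(c2 * f x) := by
    intro x hx1 hx2
    have h1 : 1/2 ≤ e*x - k := by
      have : e * m ≤ e * x := (mul_le_mul_iff_right₀ he).2 hx1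
      rw [hm_def, mul_add, ha_def, mul_div_cancel₀ _ (ne_of_gt he), hd_def] at this
      have hed : e * (1/(2*e)) = 1/2 := by field_simp
      rw [hed] at this; linarith
    have h2 : e*x - k < 1 := by
      have : e * x < e * b := (mul_lt_mul_iff_right₀ he).2 hx2
      rw [hb_def, mul_div_cancel₀ _ (ne_of_gt he)] at this; linarith
    simp only [hF_def, haarChild, haarMother, he_def]
    rw [if_neg (by rw [← he_def]; intro h; linarith [h.2]), if_pos (by rw [← he_def]; exact ⟨h1, h2⟩)]
    ring
  have h01 : (0:ℝ) ≤ 1 := by norm_num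
  by_cases hint : IntervalIntegrable F volume 0 1
  · -- integrable case
    have hIam : IntervalIntegrable F volume a m := by
      apply hint.mono_set
      rw [Set.uIcc_of_le ham.le, Set.uIcc_of_le h01]
      exact Set.Icc_subset_Icc ha0 (le_trans hmb.le hb1)
    have hImb : IntervalIntegrable F volume m b := by
      apply hint.mono_set
      rw [Set.uIcc_of_le hmb.le, Set.uIcc_of_le h01]
      exact Set.Icc_subset_Icc (le_trans ha0 ham.le) hb1
    -- F = c2 * f a.e. on [a,m]
    have haeam : ∀ᵐ x : ℝ, x ∈ Set.uIoc a m → F x = c2 * f x := by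
      apply ae_ne_imp m; intro x hxm hx
      rw [Set.uIoc_of_le ham.le] at hx
      exact hF1 x hx.1.le (lt_of_le_of_ne hx.2 hxm)
    have haemb : ∀ᵐ x : ℝ, x ∈ Set.uIoc m b → F x = -(c2 * f x) := by
      apply ae_ne_imp b; intro x hxb hx
      rw [Set.uIoc_of_le hmb.le] at hx
      exact hF2 x hx.1.le (lt_of_le_of_ne hx.2 hxb)
    -- integrability of f on the two halves
    have hfam : IntervalIntegrable f volume a m := by
      have h1 : IntervalIntegrable (fun x => c2 * f x) volume a m := hIam.congr_ae ((ae_restrict_iff' measurableSet_uIoc).2 haeam)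
      have := h1.const_mul c2⁻¹
      simpa [← mul_assoc, inv_mul_cancel₀ (ne_of_gt hc2)] using this
    have hfmb : IntervalIntegrable f volume m b := by
      have h1 : IntervalIntegrable (fun x => -(c2 * f x)) volume m b := hImb.congr_ae ((ae_restrict_iff' measurableSet_uIoc).2 haemb)
      have h2 := h1.neg
      have := h2.const_mul c2⁻¹
      simp only [Pi.neg_def, neg_neg] at h2
      have h3 := h2.const_mul c2⁻¹
      simpa [← mul_assoc, inv_mul_cancel₀ (ne_of_gt hc2)] using h3
    have hfshift : IntervalIntegrable (fun x => f (x + d)) volume a m := by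
      have := hfmb.comp_add_right d
      rwa [show m - d = a by rw [← hm_eq]; ring, show b - d = m by rw [← hb_eq]; ring] at this
    -- split the integral
    have hI0a : IntervalIntegrable F volume 0 a := by
      apply hint.mono_set
      rw [Set.uIcc_of_le ha0, Set.uIcc_of_le h01]
      exact Set.Icc_subset_Icc le_rfl (le_trans (le_trans ham.le hmb.le) hb1)
    have hIb1 : IntervalIntegrable F volume b 1 := by
      apply hint.mono_set
      rw [Set.uIcc_of_le hb1, Set.uIcc_of_le h01]
      exact Set.Icc_subset_Icc (le_trans ha0 (le_trans ham.le hmb.le)) le_rfl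
    have hcdef : haarCoeff j k f = ∫ x in (0:ℝ)..1, F x := rfl
    have hsplit : haarCoeff j k f =
        (∫ x in (0:ℝ)..a, F x) + ((∫ x in a..m, F x) + ((∫ x in m..b, F x) + ∫ x in b..(1:ℝ), F x)) := by
      rw [hcdef]
      rw [intervalIntegral.integral_add_adjacent_intervals hImb hIb1]
      rw [intervalIntegral.integral_add_adjacent_intervals hIam (hImb.trans hIb1)]
      rw [intervalIntegral.integral_add_adjacent_intervals hI0a ((hIam.trans hImb).trans hIb1)]
    have hz1 : (∫ x in (0:ℝ)..a, F x) = 0 := by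
      apply intervalIntegral.integral_zero_ae
      apply ae_ne_imp a; intro x hxa hx
      rw [Set.uIoc_of_le ha0] at hx
      exact hFlt x (lt_of_le_of_ne hx.2 hxa)
    have hz2 : (∫ x in b..(1:ℝ), F x) = 0 := by
      apply intervalIntegral.integral_zero_ae
      apply Filter.Eventually.of_forall; intro x hx
      rw [Set.uIoc_of_le hb1] at hx
      exact hFgt x hx.1.le
    have hv1 : (∫ x in a..m, F x) = c2 * ∫ x in a..m, f x := by
      rw [intervalIntegral.integral_congr_ae haeam, intervalIntegral.integral_const_mul]
    have hv2 : (∫ x in m..b, F x) = -(c2 * ∫ x in m..b, f x) := by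
      rw [intervalIntegral.integral_congr_ae haemb]
      rw [intervalIntegral.integral_neg, intervalIntegral.integral_const_mul]
    have hshift : (∫ x in m..b, f x) = ∫ x in a..m, f (x + d) := by
      rw [intervalIntegral.integral_comp_add_right, hm_eq, hb_eq]
    have hkey : haarCoeff j k f = c2 * ∫ x in a..m, (f x - f (x + d)) := by
      rw [hsplit, hz1, hz2, hv1, hv2, hshift,
        intervalIntegral.integral_sub hfam hfshift]
      ring
    -- pointwise bound
    have hpt : ∀ x ∈ Set.uIoc a m, ‖f x - f (x + d)‖ ≤ V := by
      intro x hx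
      rw [Set.uIoc_of_le ham.le] at hx
      have hx1 : x ∈ Set.Icc a b := ⟨hx.1.le, le_trans hx.2 hmb.le⟩
      have hx2 : x + d ∈ Set.Icc a b := ⟨by linarith [hx.1, hd0.le], by rw [← hb_eq]; linarith [hx.2]⟩
      have := eVariationOn.edist_le f hx1 hx2
      rw [edist_dist] at this
      have h2 : ENNReal.ofReal (dist (f x) (f (x+d))) ≤ eVariationOn f (Set.Icc a b) := this
      have h3 := ENNReal.toReal_mono hfin h2
      rw [ENNReal.toReal_ofReal dist_nonneg] at h3
      rwa [Real.norm_eq_abs, ← Real.dist_eq]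
    have hbound := intervalIntegral.norm_integral_le_of_norm_le_const hpt
    rw [hkey, abs_mul, abs_of_pos hc2]
    have hma : |m - a| = d := by rw [← hm_eq]; simp [abs_of_pos hd0]
    rw [Real.norm_eq_abs, hma] at hbound
    have h5 : c2 * |∫ x in a..m, (f x - f (x+d))| ≤ c2 * (V * d) :=
      mul_le_mul_of_nonneg_left hbound hc2.le
    refine le_trans h5 (le_of_eq ?_)
    rw [hc2_def, rpow_half, hd_def]
    have hσ : (0:ℝ) < Real.sqrt 2 := by positivity
    have hσ2 : (Real.sqrt 2)^2 = 2 := Real.sq_sqrt (by norm_num)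
    rw [he_def]
    have h2j : (2:ℝ)^j = (Real.sqrt 2)^j * (Real.sqrt 2)^j := by
      rw [← pow_add, ← two_mul, pow_mul, hσ2]
    rw [h2j]
    rw [inv_pow]
    field_simp
  · -- non-integrable: integral is 0
    have hcdef : haarCoeff j k f = ∫ x in (0:ℝ)..1, F x := rfl
    rw [hcdef, intervalIntegral.integral_undef hint]
    simp only [abs_zero]
    positivity

lemma sum_eVar (f : ℝ → ℝ) (d : ℝ) (hd : 0 ≤ d) (n : ℕ) :
    ∑ k ∈ Finset.range n, eVariationOn f (Set.Icc ((k:ℝ)*d) (((k:ℝ)+1)*d))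
      = eVariationOn f (Set.Icc 0 ((n:ℝ)*d)) := by
  induction n with
  | zero =>
    simp only [Finset.range_zero, Finset.sum_empty, Nat.cast_zero, zero_mul]
    exact (eVariationOn.subsingleton f (by rw [Set.Icc_self]; exact Set.subsingleton_singleton)).symm
  | succ n ih =>
    rw [Finset.sum_range_succ, ih]
    have h := eVariationOn.Icc_add_Icc f (s := Set.univ) (a := (0:ℝ)) (b := (n:ℝ)*d)
      (c := ((n:ℝ)+1)*d) (by positivity) (by nlinarith) (Set.mem_univ _)
    simp only [Set.univ_inter] at h
    push_cast
    rw [h]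

lemma level_sum (f : ℝ → ℝ) (j : ℕ) (K : Finset ℕ) (hK : ∀ k ∈ K, k < 2^j) :
    ∑ k ∈ K, eVariationOn f (Set.Icc ((k:ℝ)/2^j) (((k:ℝ)+1)/2^j))
      ≤ eVariationOn f (Set.Icc 0 1) := by
  have hsub : K ⊆ Finset.range (2^j) := fun k hk => Finset.mem_range.2 (hK k hk)
  have h1 : ∑ k ∈ K, eVariationOn f (Set.Icc ((k:ℝ)/2^j) (((k:ℝ)+1)/2^j))
      ≤ ∑ k ∈ Finset.range (2^j), eVariationOn f (Set.Icc ((k:ℝ)/2^j) (((k:ℝ)+1)/2^j)) :=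
    Finset.sum_le_sum_of_subset hsub
  have he : (0:ℝ) < (2:ℝ)^j := by positivity
  have h2 := sum_eVar f ((2:ℝ)^j)⁻¹ (by positivity) (2^j)
  have h3 : ∀ k : ℕ, (k:ℝ) * ((2:ℝ)^j)⁻¹ = (k:ℝ)/2^j := fun k => by rw [div_eq_mul_inv]
  have h4 : ∀ k : ℕ, ((k:ℝ)+1) * ((2:ℝ)^j)⁻¹ = ((k:ℝ)+1)/2^j := fun k => by
    rw [div_eq_mul_inv]
  simp only [h3, h4] at h2
  rw [h2] at h1
  have h5 : ((2^j : ℕ):ℝ) / (2:ℝ)^j = 1 := by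
    push_cast
    exact div_self (ne_of_gt he)
  rwa [h5] at h1

lemma geom_tail (q : ℝ) (h0 : 0 ≤ q) (h1 : q < 1) (J : ℕ) (L : Finset ℕ)
    (hL : ∀ j ∈ L, J < j) : ∑ j ∈ L, q^j ≤ q^(J+1) / (1 - q) := by
  rcases L.eq_empty_or_nonempty with rfl | hne
  · simp only [Finset.sum_empty]
    apply div_nonneg (by positivity)
    linarith
  · set N := L.sup id + 1 with hN
    have hsub : L ⊆ Finset.Ico (J+1) N := by
      intro j hj
      exact Finset.mem_Ico.2 ⟨hL j hj, Nat.lt_succ_of_le (Finset.le_sup (f := id) hj)⟩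
    have hle : ∑ j ∈ L, q^j ≤ ∑ j ∈ Finset.Ico (J+1) N, q^j :=
      Finset.sum_le_sum_of_subset_of_nonneg hsub (fun i _ _ => by positivity)
    have hJN : J + 1 ≤ N := by
      obtain ⟨j, hj⟩ := hne
      exact le_trans (hL j hj) (Nat.lt_succ_of_le (Finset.le_sup (f := id) hj)).le
    rcases eq_or_lt_of_le h1.le with rfl | hq1
    · simp at h1
    · have hgeo := geom_sum_Ico (ne_of_lt h1) hJN
      rw [hgeo] at hle
      refine le_trans hle ?_
      have heq : (q^N - q^(J+1))/(q-1) = (q^(J+1) - q^N)/(1-q) := by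
        rw [div_eq_div_iff (by linarith) (by linarith)]
        ring
      rw [heq]
      have hqN : 0 ≤ q^N := by positivity
      exact div_le_div_of_nonneg_right (by linarith) (by linarith) |>.trans_eq rfl

set_option maxHeartbeats 1000000 in
/-- There is a universal constant `C > 0` such that for every `f : [0,1] → ℝ` of total
variation `TV` on `[0,1]` and every `r ≥ 1`, the `r`-th largest absolute Haar coefficient
of `f` is at most `C · TV · r^{-3/2}`.  This is expressed as: among any `r` distinct valid
Haar indices, some coefficient has absolute value at most `C · TV · r^{-3/2}`. -/
theorem rth_largest_haar_coeff_le :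
    ∃ C : ℝ, 0 < C ∧ ∀ f : ℝ → ℝ, ∀ TV : ℝ, 0 ≤ TV →
      eVariationOn f (Set.Icc (0:ℝ) 1) = ENNReal.ofReal TV →
      ∀ r : ℕ, 1 ≤ r → ∀ S : Finset (ℕ × ℕ),
        (∀ p ∈ S, p.2 < 2 ^ p.1) → S.card = r →
        ∃ p ∈ S, |haarCoeff p.1 p.2 f| ≤ C * TV * (r:ℝ) ^ (-(3:ℝ)/2) := by
  refine ⟨8, by norm_num, ?_⟩
  intro f TV hTV hvar r hr S hS hcard
  have hσ0 : 0 < Real.sqrt 2 := Real.sqrt_pos.2 (by norm_num)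
  have hσ2 : Real.sqrt 2 ^ 2 = 2 := Real.sq_sqrt (by norm_num)
  have hσ1 : 1 < Real.sqrt 2 := by nlinarith
  set q : ℝ := (Real.sqrt 2)⁻¹ with hq_def
  have hq0 : 0 < q := by positivity
  have hq1 : q < 1 := by rw [hq_def, inv_lt_one_iff₀]; right; exact hσ1
  have hfin1 : eVariationOn f (Set.Icc (0:ℝ) 1) ≠ ⊤ := by
    rw [hvar]; exact ENNReal.ofReal_ne_top
  have hsubIcc : ∀ p : ℕ × ℕ, p.2 < 2^p.1 →
      Set.Icc ((p.2:ℝ)/2^p.1) (((p.2:ℝ)+1)/2^p.1) ⊆ Set.Icc (0:ℝ) 1 := by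
    intro p hp
    apply Set.Icc_subset_Icc
    · positivity
    · rw [div_le_one (by positivity)]
      have h := hp
      have h2 : ((p.2+1:ℕ):ℝ) ≤ ((2^p.1:ℕ):ℝ) := by exact_mod_cast h
      push_cast at h2; linarith
  have hVmono : ∀ p : ℕ × ℕ, p.2 < 2^p.1 →
      eVariationOn f (Set.Icc ((p.2:ℝ)/2^p.1) (((p.2:ℝ)+1)/2^p.1)) ≤ ENNReal.ofReal TV := by
    intro p hp; rw [← hvar]; exact eVariationOn.mono f (hsubIcc p hp)
  have hVfin : ∀ p : ℕ × ℕ, p.2 < 2^p.1 →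
      eVariationOn f (Set.Icc ((p.2:ℝ)/2^p.1) (((p.2:ℝ)+1)/2^p.1)) ≠ ⊤ :=
    fun p hp => ne_top_of_le_ne_top ENNReal.ofReal_ne_top (hVmono p hp)
  have hVle : ∀ p : ℕ × ℕ, p.2 < 2^p.1 →
      (eVariationOn f (Set.Icc ((p.2:ℝ)/2^p.1) (((p.2:ℝ)+1)/2^p.1))).toReal ≤ TV := by
    intro p hp
    have h := ENNReal.toReal_mono ENNReal.ofReal_ne_top (hVmono p hp)
    rwa [ENNReal.toReal_ofReal hTV] at h
  have hcb : ∀ p ∈ S, |haarCoeff p.1 p.2 f| ≤ q ^ p.1 / 2 *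
      (eVariationOn f (Set.Icc ((p.2:ℝ)/2^p.1) (((p.2:ℝ)+1)/2^p.1))).toReal :=
    fun p hp => haar_coeff_bound f p.1 p.2 (hS p hp) (hVfin p (hS p hp))
  have hcb2 : ∀ p ∈ S, |haarCoeff p.1 p.2 f| ≤ TV / 2 := by
    intro p hp
    refine le_trans (hcb p hp) ?_
    have h1 : q ^ p.1 ≤ 1 := pow_le_one₀ hq0.le hq1.le
    have h2 := hVle p (hS p hp)
    have h3 : (0:ℝ) ≤
        (eVariationOn f (Set.Icc ((p.2:ℝ)/2^p.1) (((p.2:ℝ)+1)/2^p.1))).toReal :=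
      ENNReal.toReal_nonneg
    nlinarith
  have hr0 : (0:ℝ) < r := by exact_mod_cast hr
  set s : ℝ := Real.sqrt r with hs_def
  have hs0 : 0 < s := Real.sqrt_pos.2 hr0
  have hs2 : s^2 = r := Real.sq_sqrt hr0.le
  have hrp : (r:ℝ) ^ (-(3:ℝ)/2) = ((r:ℝ) * s)⁻¹ := by
    rw [show (-(3:ℝ)/2) = -(3/2) by norm_num, Real.rpow_neg hr0.le]
    congr 1
    rw [show (3:ℝ)/2 = 1 + 1/2 by norm_num, Real.rpow_add hr0, Real.rpow_one, hs_def,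
      Real.sqrt_eq_rpow]
  have hSne : S.Nonempty := Finset.card_pos.1 (by rw [hcard]; omega)
  by_cases hbig : 7 ≤ r
  · -- large r : contradiction argument
    by_contra hcon
    push_neg at hcon
    have hTVpos : 0 < TV := by
      rcases hTV.lt_or_eq with h | h
      · exact h
      · exfalso
        obtain ⟨p0, hp0⟩ := hSne
        have h1 := hcon p0 hp0
        have h2 := hcb2 p0 hp0
        rw [← h] at h1 h2
        simp only [mul_zero, zero_mul] at h1
        nlinarith [abs_nonneg (haarCoeff p0.1 p0.2 f)]
    set t : ℝ := 8 * TV * ((r:ℝ)*s)⁻¹ with ht_def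
    have hrs0 : 0 < (r:ℝ)*s := by positivity
    have ht0 : 0 < t := by positivity
    have hconv : ∀ p ∈ S, t < |haarCoeff p.1 p.2 f| := by
      intro p hp
      have h := hcon p hp
      rwa [hrp] at h
    set L := S.image Prod.fst with hL_def
    set m : ℕ → ℕ := fun j => (S.filter (fun p => p.1 = j)).card with hm_def
    have hfiber : ∑ j ∈ L, m j = r := by
      rw [← hcard]
      exact (Finset.card_eq_sum_card_fiberwise
        (fun p hp => Finset.mem_image_of_mem _ hp)).symm
    -- per-level bounds
    have hm2 : ∀ j : ℕ, m j ≤ 2^j := by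
      intro j
      have hinj : Set.InjOn Prod.snd ((S.filter (fun p => p.1 = j)) : Set (ℕ × ℕ)) := by
        intro p hp p' hp' hpp
        have h1 : p.1 = j := (Finset.mem_filter.1 hp).2
        have h2 : p'.1 = j := (Finset.mem_filter.1 hp').2
        exact Prod.ext (h1.trans h2.symm) hpp
      have hcimg := Finset.card_image_of_injOn hinj
      have hsub : (S.filter (fun p => p.1 = j)).image Prod.snd ⊆ Finset.range (2^j) := by
        intro k hk
        obtain ⟨p, hp, hpk⟩ := Finset.mem_image.1 hk
        have := hS p (Finset.mem_filter.1 hp).1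
        rw [(Finset.mem_filter.1 hp).2] at this
        exact Finset.mem_range.2 (hpk ▸ this)
      calc m j = ((S.filter (fun p => p.1 = j)).image Prod.snd).card := hcimg.symm
        _ ≤ (Finset.range (2^j)).card := Finset.card_le_card hsub
        _ = 2^j := Finset.card_range _
    have hmAq : ∀ j : ℕ, (m j : ℝ) ≤ (r:ℝ)*s/16 * q^j := by
      intro j
      set K := (S.filter (fun p => p.1 = j)).image Prod.snd with hK_def
      have hinj : Set.InjOn Prod.snd ((S.filter (fun p => p.1 = j)) : Set (ℕ × ℕ)) := by
        intro p hp p' hp' hpp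
        exact Prod.ext ((Finset.mem_filter.1 hp).2.trans
          (Finset.mem_filter.1 hp').2.symm) hpp
      have hcimg : K.card = m j := Finset.card_image_of_injOn hinj
      have hKmem : ∀ k ∈ K, (j, k) ∈ S ∧ k < 2^j := by
        intro k hk
        obtain ⟨p, hp, hpk⟩ := Finset.mem_image.1 hk
        have h1 := (Finset.mem_filter.1 hp).1
        have h2 := (Finset.mem_filter.1 hp).2
        have hpe : p = (j, k) := Prod.ext h2 hpk
        rw [hpe] at h1
        exact ⟨h1, by have := hS _ h1; simpa using this⟩
      -- sum of local variations ≤ TV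
      have hsumE := level_sum f j K (fun k hk => (hKmem k hk).2)
      have hfinterm : ∀ k ∈ K, eVariationOn f
          (Set.Icc ((k:ℝ)/2^j) (((k:ℝ)+1)/2^j)) ≠ ⊤ := by
        intro k hk
        exact hVfin (j, k) (by simpa using (hKmem k hk).2)
      have hsumR : ∑ k ∈ K,
          (eVariationOn f (Set.Icc ((k:ℝ)/2^j) (((k:ℝ)+1)/2^j))).toReal ≤ TV := by
        rw [← ENNReal.toReal_sum hfinterm]
        have := ENNReal.toReal_mono hfin1 hsumE
        rwa [hvar, ENNReal.toReal_ofReal hTV] at this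
      -- each local variation is large
      have hterm : ∀ k ∈ K, 2*t/q^j ≤
          (eVariationOn f (Set.Icc ((k:ℝ)/2^j) (((k:ℝ)+1)/2^j))).toReal := by
        intro k hk
        have h1 := hconv (j, k) (hKmem k hk).1
        have h2 := hcb (j, k) (hKmem k hk).1
        simp only at h1 h2
        have hqj : (0:ℝ) < q^j := by positivity
        rw [div_le_iff₀ hqj]
        nlinarith
      have hcs : (K.card : ℝ) * (2*t/q^j) ≤ ∑ k ∈ K,
          (eVariationOn f (Set.Icc ((k:ℝ)/2^j) (((k:ℝ)+1)/2^j))).toReal := by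
        have := Finset.card_nsmul_le_sum K _ _ hterm
        simpa [nsmul_eq_mul] using this
      have hc : (0:ℝ) < 2*t/q^j := by positivity
      have h6 : (m j : ℝ) * (2*t/q^j) ≤ TV := by
        rw [← hcimg] at *
        exact le_trans hcs hsumR
      have h7 : (m j : ℝ) ≤ TV / (2*t/q^j) := (le_div_iff₀ hc).2 h6
      have hqj : (q:ℝ)^j ≠ 0 := by positivity
      have hX : TV / (2*t/q^j) = (r:ℝ)*s/16 * q^j := by
        rw [ht_def]
        field_simp
        ring
      rwa [hX] at h7
    -- choice of J
    have hrne : r ≠ 0 := by omega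
    have hlog2 : 2 ≤ Nat.log 2 r := by
      rw [Nat.le_log_iff_pow_le (by norm_num) hrne]
      omega
    set J : ℕ := Nat.log 2 r - 2 with hJ_def
    have hJeq : J + 2 = Nat.log 2 r := by omega
    have hJ2 : 2^(J+2) ≤ r := by
      rw [hJeq]; exact Nat.pow_log_le_self 2 hrne
    have hJ3 : r < 2^(J+3) := by
      have h := Nat.lt_pow_succ_log_self (by norm_num : 1 < 2) r
      have heq3 : Nat.log 2 r + 1 = J + 3 := by omega
      rwa [Nat.succ_eq_add_one, heq3] at h
    -- split the sum
    set Lh := L.filter (fun j => j ≤ J) with hLh_def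
    set Lt := L.filter (fun j => ¬ j ≤ J) with hLt_def
    have hnat : ∑ j ∈ Lh, m j + ∑ j ∈ Lt, m j = r := by
      rw [hLh_def, hLt_def, Finset.sum_filter_add_sum_filter_not]
      exact hfiber
    have hreal : (∑ j ∈ Lh, (m j:ℝ)) + ∑ j ∈ Lt, (m j:ℝ) = r := by
      exact_mod_cast hnat
    -- head bound
    have hhead : ∑ j ∈ Lh, (m j:ℝ) ≤ (r:ℝ)/2 - 1 := by
      have h1 : ∑ j ∈ Lh, (m j:ℝ) ≤ ∑ j ∈ Lh, (2:ℝ)^j :=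
        Finset.sum_le_sum (fun j _ => by exact_mod_cast hm2 j)
      have hsub : Lh ⊆ Finset.range (J+1) := by
        intro j hj
        exact Finset.mem_range.2 (Nat.lt_succ_of_le (Finset.mem_filter.1 hj).2)
      have h2 : ∑ j ∈ Lh, (2:ℝ)^j ≤ ∑ j ∈ Finset.range (J+1), (2:ℝ)^j :=
        Finset.sum_le_sum_of_subset_of_nonneg hsub (fun i _ _ => by positivity)
      have h3 : ∑ j ∈ Finset.range (J+1), (2:ℝ)^j = 2^(J+1) - 1 := by
        have := geom_sum_eq (show (2:ℝ) ≠ 1 by norm_num) (J+1)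
        rw [this]; norm_num
      have h4 : (2:ℝ)^(J+2) ≤ r := by exact_mod_cast hJ2
      have h5 : (2:ℝ)^(J+1) ≤ (r:ℝ)/2 := by
        have : (2:ℝ)^(J+2) = 2 * 2^(J+1) := by ring
        linarith [this ▸ h4]
      linarith
    -- tail bound
    have htail : ∑ j ∈ Lt, (m j:ℝ) ≤ 7*(r:ℝ)/16 := by
      have h1 : ∑ j ∈ Lt, (m j:ℝ) ≤ ∑ j ∈ Lt, (r:ℝ)*s/16 * q^j :=
        Finset.sum_le_sum (fun j _ => hmAq j)
      have h2 : ∑ j ∈ Lt, (r:ℝ)*s/16 * q^j = (r:ℝ)*s/16 * ∑ j ∈ Lt, q^j := by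
        rw [Finset.mul_sum]
      have h3 := geom_tail q hq0.le hq1 J Lt
        (fun j hj => Nat.lt_of_not_le (Finset.mem_filter.1 hj).2)
      -- q^(J+1) ≤ 2/s
      have hsle : s ≤ Real.sqrt 2 ^ (J+3) := by
        have hc : (r:ℝ) ≤ (2:ℝ)^(J+3) := by exact_mod_cast hJ3.le
        have h5 : s ≤ Real.sqrt ((2:ℝ)^(J+3)) := Real.sqrt_le_sqrt hc
        have h6 : Real.sqrt ((2:ℝ)^(J+3)) = Real.sqrt 2 ^ (J+3) := by
          have h7 : ((Real.sqrt 2) ^ (J+3)) ^ 2 = (2:ℝ)^(J+3) := by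
            rw [← pow_mul, mul_comm, pow_mul, hσ2]
          rw [← h7, Real.sqrt_sq (by positivity)]
        rwa [h6] at h5
      have hqJ : q^(J+1) * s ≤ 2 := by
        have h8 : q^(J+1) * (Real.sqrt 2 ^ (J+3)) = 2 := by
          have hsp : Real.sqrt 2 ^ (J+3) = Real.sqrt 2 ^ (J+1) * Real.sqrt 2 ^ 2 := by
            rw [← pow_add]
          rw [hsp, hσ2, hq_def, inv_pow, inv_mul_cancel_left₀ (pow_ne_zero _ (ne_of_gt hσ0))]
        calc q^(J+1) * s ≤ q^(J+1) * (Real.sqrt 2 ^ (J+3)) := by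
              apply mul_le_mul_of_nonneg_left hsle (by positivity)
          _ = 2 := h8
      have hqJ2 : q^(J+1) ≤ 2/s := (le_div_iff₀ hs0).2 hqJ
      have hinv : (1-q)⁻¹ ≤ 7/2 := by
        have h9 : (2:ℝ)/7 ≤ 1 - q := by
          rw [hq_def]
          have h51 : (7:ℝ)/5 ≤ Real.sqrt 2 := by nlinarith
          have h52 : (Real.sqrt 2)⁻¹ ≤ ((7:ℝ)/5)⁻¹ :=
            inv_anti₀ (by norm_num) h51
          have h53 : ((7:ℝ)/5)⁻¹ = 5/7 := by norm_num
          linarith [h53 ▸ h52]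
        have h10 : (0:ℝ) < 2/7 := by norm_num
        calc (1-q)⁻¹ ≤ ((2:ℝ)/7)⁻¹ := by
              apply inv_anti₀ h10 h9
          _ = 7/2 := by norm_num
      have h11 : q^(J+1) / (1-q) ≤ (2/s) * (7/2) := by
        rw [div_eq_mul_inv]
        apply mul_le_mul hqJ2 hinv (inv_nonneg.2 (by linarith)) (by positivity)
      have h12 : (r:ℝ)*s/16 * (q^(J+1)/(1-q)) ≤ (r:ℝ)*s/16 * ((2/s)*(7/2)) := by
        apply mul_le_mul_of_nonneg_left h11 (by positivity)
      have h13 : (r:ℝ)*s/16 * ((2/s)*(7/2)) = 7*(r:ℝ)/16 := by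
        field_simp
      calc ∑ j ∈ Lt, (m j:ℝ) ≤ (r:ℝ)*s/16 * ∑ j ∈ Lt, q^j := by rw [← h2]; exact h1
        _ ≤ (r:ℝ)*s/16 * (q^(J+1)/(1-q)) := by
            apply mul_le_mul_of_nonneg_left h3 (by positivity)
        _ ≤ (r:ℝ)*s/16 * ((2/s)*(7/2)) := h12
        _ = 7*(r:ℝ)/16 := h13
    linarith
  · -- small r
    obtain ⟨p0, hp0⟩ := hSne
    refine ⟨p0, hp0, ?_⟩
    refine le_trans (hcb2 p0 hp0) ?_
    rw [hrp]
    push_neg at hbig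
    have h6 : (r:ℝ) ≤ 6 := by exact_mod_cast Nat.lt_succ_iff.1 hbig
    have hrs : (r:ℝ)*s ≤ 16 := by
      have h1 : ((r:ℝ)*s)^2 = (r:ℝ)^3 := by
        rw [mul_pow, hs2]; ring
      nlinarith [mul_pos hr0 hs0]
    have hpos : 0 < (r:ℝ)*s := by positivity
    have heq : 8 * TV * ((r:ℝ)*s)⁻¹ = 8*TV/((r:ℝ)*s) := by ring
    rw [heq, le_div_iff₀ hpos]
    nlinarith
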